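/- arXiv:1211.0616 — 5 statements merged into one kernel-verified Lean document; each statement's English description precedes it below -/
import Mathlib

section
/- For every n ≥ 0, d ≥ 2, and t ∈ [-1,1] with n/(n+d-2) + 2|t| ≤ 1, the d-dimensional Legendre polynomial satisfies |P_{d,n}(t)| ≤ sqrt( ∏_{i=1}^n ( i/(i+d-2) + 2|t| ) ). -/
set_option maxHeartbeats 1000000


/-- The `d`-dimensional Legendre polynomials, defined by the recursion
`P_{d,n}(x) = ((2n+d-4)/(n+d-3)) x P_{d,n-1}(x) - ((n-1)/(n+d-3)) P_{d,n-2}(x)`,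
`P_{d,0} ≡ 1`, `P_{d,1}(x) = x`. -/
noncomputable def legendreP (d : ℕ) : ℕ → ℝ → ℝ
  | 0 => fun _ => 1
  | 1 => fun x => x
  | n + 2 => fun x =>
      ((2 * (n : ℝ) + d) / ((n : ℝ) + d - 1)) * x * legendreP d (n + 1) x
        - (((n : ℝ) + 1) / ((n : ℝ) + d - 1)) * legendreP d n x

private lemma legendre_aux (d : ℕ) (hd : 2 ≤ d) (t : ℝ) (hT : |t| ≤ 1) :
    ∀ n : ℕ, ((n : ℝ) / ((n : ℝ) + (d : ℝ) - 2) + 2 * |t| ≤ 1) →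
      |legendreP d n t| ≤
        Real.sqrt (∏ i ∈ Finset.Icc 1 n, ((i : ℝ) / ((i : ℝ) + (d : ℝ) - 2) + 2 * |t|)) := by
  have hd2 : (2:ℝ) ≤ (d:ℝ) := by exact_mod_cast hd
  have habs : (0:ℝ) ≤ |t| := abs_nonneg t
  have hcnn : ∀ i : ℕ, (0:ℝ) ≤ (i : ℝ) / ((i : ℝ) + (d : ℝ) - 2) + 2 * |t| := by
    intro i
    have h0 : (0:ℝ) ≤ (i:ℝ) := Nat.cast_nonneg i
    have h1 : (0:ℝ) ≤ (i:ℝ) + (d:ℝ) - 2 := by linarith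
    have := div_nonneg h0 h1
    linarith
  have hmono : ∀ i : ℕ, (i : ℝ) / ((i : ℝ) + (d : ℝ) - 2)
      ≤ ((i:ℝ) + 1) / (((i:ℝ) + 1) + (d : ℝ) - 2) := by
    intro i
    rcases Nat.eq_zero_or_pos i with rfl | hi
    · push_cast
      rw [zero_div]
      apply div_nonneg (by norm_num) (by linarith)
    · have hi1 : (1:ℝ) ≤ (i:ℝ) := by exact_mod_cast hi
      rw [div_le_div_iff₀ (by linarith) (by linarith)]
      nlinarith
  intro n
  induction n using Nat.strong_induction_on with
  | _ n ih =>
    match n with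
    | 0 => intro _; simp [legendreP]
    | 1 =>
      intro _
      simp only [legendreP, Finset.Icc_self, Finset.prod_singleton, Nat.cast_one]
      have h1 : (0:ℝ) ≤ (1:ℝ) / ((1:ℝ) + (d:ℝ) - 2) :=
        div_nonneg (by norm_num) (by linarith)
      refine (Real.le_sqrt (abs_nonneg t) (by linarith)).mpr ?_
      nlinarith [sq_abs t]
    | (m + 2) =>
      intro h2
      have hm0 : (0:ℝ) ≤ (m:ℝ) := Nat.cast_nonneg m
      set cm : ℝ := (m:ℝ) / ((m:ℝ) + (d:ℝ) - 2) + 2 * |t| with hcm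
      set cm1 : ℝ := ((m:ℝ) + 1) / (((m:ℝ) + 1) + (d:ℝ) - 2) + 2 * |t| with hcm1
      set cm2 : ℝ := ((m:ℝ) + 2) / (((m:ℝ) + 2) + (d:ℝ) - 2) + 2 * |t| with hcm2
      have h2' : cm2 ≤ 1 := by
        rw [hcm2]; push_cast at h2; convert h2 using 3 <;> ring
      have h21 : cm1 ≤ cm2 := by
        have := hmono (m + 1); push_cast at this
        rw [hcm1, hcm2]
        have e1 : ((m:ℝ) + 1 + 1) / (((m:ℝ) + 1 + 1) + (d:ℝ) - 2)
            = ((m:ℝ) + 2) / (((m:ℝ) + 2) + (d:ℝ) - 2) := by ring_nf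
        linarith [e1 ▸ this]
      have h10 : cm ≤ cm1 := by
        have := hmono m; rw [hcm, hcm1]; linarith
      have h1le : cm1 ≤ 1 := le_trans h21 h2'
      have h0le : cm ≤ 1 := le_trans h10 h1le
      have hcm1nn : (0:ℝ) ≤ cm1 := by
        have := hcnn (m + 1); push_cast at this; rw [hcm1]; linarith
      have hcm2nn : (0:ℝ) ≤ cm2 := by
        have := hcnn (m + 2); push_cast at this; rw [hcm2]
        have e1 : ((m:ℝ) + 2) / (((m:ℝ) + 2) + (d:ℝ) - 2)
            = ((m:ℝ) + 2) / ((m:ℝ) + 2 + (d:ℝ) - 2) := by ring_nf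
        linarith
      -- induction hypotheses
      have IH1 : |legendreP d (m + 1) t| ≤
          Real.sqrt (∏ i ∈ Finset.Icc 1 (m + 1),
            ((i : ℝ) / ((i : ℝ) + (d : ℝ) - 2) + 2 * |t|)) := by
        apply ih (m + 1) (by omega)
        push_cast
        rw [hcm1] at h1le; linarith
      have IH0 : |legendreP d m t| ≤
          Real.sqrt (∏ i ∈ Finset.Icc 1 m,
            ((i : ℝ) / ((i : ℝ) + (d : ℝ) - 2) + 2 * |t|)) := by
        apply ih m (by omega)
        rw [hcm] at h0le; linarith
      -- products
      set f : ℕ → ℝ := fun i => (i : ℝ) / ((i : ℝ) + (d : ℝ) - 2) + 2 * |t| with hf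
      have hf1 : f (m + 1) = cm1 := by rw [hf, hcm1]; push_cast; ring_nf
      have hf2 : f (m + 2) = cm2 := by rw [hf, hcm2]; push_cast; ring_nf
      set Q0 : ℝ := ∏ i ∈ Finset.Icc 1 m, f i with hQ0
      have hQ0nn : 0 ≤ Q0 := Finset.prod_nonneg fun i _ => hcnn i
      have hQ1 : (∏ i ∈ Finset.Icc 1 (m + 1), f i) = Q0 * cm1 := by
        rw [Finset.prod_Icc_succ_top (by omega) f, hf1, hQ0]
      have hQ2 : (∏ i ∈ Finset.Icc 1 (m + 2), f i) = Q0 * cm1 * cm2 := by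
        rw [Finset.prod_Icc_succ_top (by omega) f, hf2, ← hQ1,
          Finset.prod_Icc_succ_top (by omega) f, hf1]
      -- sqrt values
      set S0 : ℝ := Real.sqrt Q0 with hS0
      set s1 : ℝ := Real.sqrt cm1 with hs1
      set s2 : ℝ := Real.sqrt cm2 with hs2
      have hsplit1 : Real.sqrt (∏ i ∈ Finset.Icc 1 (m + 1), f i) = S0 * s1 := by
        rw [hQ1, Real.sqrt_mul hQ0nn]
      have hsplit2 : Real.sqrt (∏ i ∈ Finset.Icc 1 (m + 2), f i) = S0 * s1 * s2 := by
        rw [hQ2, Real.sqrt_mul (mul_nonneg hQ0nn hcm1nn), Real.sqrt_mul hQ0nn]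
      -- coefficients
      set a : ℝ := (2 * (m:ℝ) + (d:ℝ)) / ((m:ℝ) + (d:ℝ) - 1) with ha
      set b : ℝ := ((m:ℝ) + 1) / ((m:ℝ) + (d:ℝ) - 1) with hb
      have hD : (0:ℝ) < (m:ℝ) + (d:ℝ) - 1 := by linarith
      have ha0 : 0 ≤ a := div_nonneg (by linarith) hD.le
      have hb0 : 0 ≤ b := div_nonneg (by linarith) hD.le
      have hb1 : b ≤ 1 := by rw [hb, div_le_one hD]; linarith
      have ha2 : a ≤ 2 := by rw [ha, div_le_iff₀ hD]; linarith
      have hcm1b : cm1 = b + 2 * |t| := by rw [hcm1, hb]; ring_nf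
      -- recursion and triangle inequality
      have hrec : legendreP d (m + 2) t
          = a * t * legendreP d (m + 1) t - b * legendreP d m t := by
        rw [ha, hb]; simp only [legendreP]
      have htri : |legendreP d (m + 2) t|
          ≤ a * |t| * |legendreP d (m + 1) t| + b * |legendreP d m t| := by
        rw [hrec]
        refine le_trans (abs_sub _ _) ?_
        rw [abs_mul, abs_mul, abs_mul, abs_of_nonneg ha0, abs_of_nonneg hb0]
      -- key scalar inequality
      have hs1nn : 0 ≤ s1 := Real.sqrt_nonneg _
      have hs2nn : 0 ≤ s2 := Real.sqrt_nonneg _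
      have hs1sq : s1 ^ 2 = cm1 := Real.sq_sqrt hcm1nn
      have hs1le : s1 ≤ 1 := by rw [hs1, Real.sqrt_le_one]; exact h1le
      have hs12 : s1 ≤ s2 := Real.sqrt_le_sqrt h21
      have key : a * |t| * s1 + b ≤ s1 * s2 := by
        have has1 : a * s1 ≤ 2 := by
          calc a * s1 ≤ 2 * s1 := mul_le_mul_of_nonneg_right ha2 hs1nn
            _ ≤ 2 * 1 := by linarith
            _ = 2 := by norm_num
        have k1 : a * |t| * s1 ≤ 2 * |t| := by
          calc a * |t| * s1 = a * s1 * |t| := by ring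
            _ ≤ 2 * |t| := mul_le_mul_of_nonneg_right has1 habs
        have k2 : b + 2 * |t| ≤ s1 * s2 := by
          calc b + 2 * |t| = cm1 := hcm1b.symm
            _ = s1 * s1 := (Real.mul_self_sqrt hcm1nn).symm
            _ ≤ s1 * s2 := mul_le_mul_of_nonneg_left hs12 hs1nn
        linarith
      -- conclusion
      rw [hsplit2]
      calc |legendreP d (m + 2) t|
          ≤ a * |t| * |legendreP d (m + 1) t| + b * |legendreP d m t| := htri
        _ ≤ a * |t| * (S0 * s1) + b * S0 := by
            have k1 : a * |t| * |legendreP d (m + 1) t| ≤ a * |t| * (S0 * s1) := by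
              apply mul_le_mul_of_nonneg_left _ (mul_nonneg ha0 habs)
              rw [← hsplit1]; exact IH1
            have k2 : b * |legendreP d m t| ≤ b * S0 := by
              apply mul_le_mul_of_nonneg_left IH0 hb0
            linarith
        _ = S0 * (a * |t| * s1 + b) := by ring
        _ ≤ S0 * (s1 * s2) := mul_le_mul_of_nonneg_left key (Real.sqrt_nonneg _)
        _ = S0 * s1 * s2 := by ring

theorem stmt0 (d n : ℕ) (hd : 2 ≤ d) (t : ℝ) (ht : t ∈ Set.Icc (-1 : ℝ) 1)
    (h : (n : ℝ) / ((n : ℝ) + (d : ℝ) - 2) + 2 * |t| ≤ 1) :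
    |legendreP d n t| ≤
      Real.sqrt (∏ i ∈ Finset.Icc 1 n, ((i : ℝ) / ((i : ℝ) + (d : ℝ) - 2) + 2 * |t|)) := by
  obtain ⟨ht1, ht2⟩ := ht
  exact legendre_aux d hd t (abs_le.mpr ⟨ht1, ht2⟩) n h
end

section
/- For every n ≥ 0, d ≥ 2, and t ∈ [-1,1] with n/(n+d-2) + 2|t| ≤ 1, the d-dimensional Legendre polynomial satisfies |P_{d,n}(t)| ≤ ( n/(n+d-2) + 2|t| )^{n/2}. -/
lemma frac_mono (d n : ℕ) (hd : 2 ≤ d) :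
    (n : ℝ) / ((n : ℝ) + (d : ℝ) - 2) ≤ ((n : ℝ) + 1) / ((n : ℝ) + (d : ℝ) - 1) := by
  have hD : (2 : ℝ) ≤ (d : ℝ) := by exact_mod_cast hd
  have hN : (0 : ℝ) ≤ (n : ℝ) := n.cast_nonneg
  have h1 : (0 : ℝ) ≤ (n : ℝ) + d - 2 := by linarith
  rcases h1.eq_or_lt with h0 | h0
  · rw [← h0, div_zero]
    exact div_nonneg (by linarith) (by linarith)
  · rw [div_le_div_iff₀ h0 (by linarith)]
    nlinarith

lemma aux (d : ℕ) (hd : 2 ≤ d) (t : ℝ) (ht : |t| ≤ 1) :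
    ∀ n : ℕ, (n : ℝ) / ((n : ℝ) + (d : ℝ) - 2) + 2 * |t| ≤ 1 →
      |legendreP d n t| ≤
        ((n : ℝ) / ((n : ℝ) + (d : ℝ) - 2) + 2 * |t|) ^ ((n : ℝ) / 2) := by
  have hD : (2 : ℝ) ≤ (d : ℝ) := by exact_mod_cast hd
  have hs0 : (0 : ℝ) ≤ |t| := abs_nonneg t
  intro n
  induction n using Nat.twoStepInduction with
  | zero =>
    intro _
    norm_num [legendreP]
  | one =>
    intro _
    have hden : (0 : ℝ) < (1 : ℝ) + d - 2 := by linarith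
    have hc0 : (0 : ℝ) ≤ (1 : ℝ) / ((1 : ℝ) + d - 2) + 2 * |t| := by positivity
    have h2 : |t| ^ 2 ≤ (1 : ℝ) / ((1 : ℝ) + d - 2) + 2 * |t| := by
      have h3 : |t| ^ 2 ≤ |t| := by nlinarith
      have hfrac : (0 : ℝ) ≤ (1 : ℝ) / ((1 : ℝ) + d - 2) := by positivity
      nlinarith
    have h4 := (Real.le_sqrt hs0 hc0).mpr h2
    rw [Real.sqrt_eq_rpow] at h4
    simpa [legendreP] using h4
  | more n ih1 ih2 =>
    intro h
    push_cast at h ⊢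
    rw [show (n : ℝ) + 2 + (d : ℝ) - 2 = (n : ℝ) + d by ring] at h ⊢
    have hN0 : (0 : ℝ) ≤ (n : ℝ) := n.cast_nonneg
    have hden1 : (0 : ℝ) < (n : ℝ) + d - 1 := by linarith
    have hden2 : (0 : ℝ) < (n : ℝ) + d := by linarith
    have hcpos : 0 < ((n : ℝ) + 2) / ((n : ℝ) + d) + 2 * |t| := by
      have h5 : 0 < ((n : ℝ) + 2) / ((n : ℝ) + d) := by positivity
      linarith
    -- monotonicity of the base
    have hm1 : ((n : ℝ) + 1) / ((n : ℝ) + 1 + d - 2) ≤ ((n : ℝ) + 2) / ((n : ℝ) + d) := by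
      have h' := frac_mono d (n + 1) hd
      push_cast at h'
      calc ((n : ℝ) + 1) / ((n : ℝ) + 1 + d - 2)
          = ((n : ℝ) + 1) / ((n : ℝ) + 1 + (d : ℝ) - 2) := by ring_nf
        _ ≤ ((n : ℝ) + 1 + 1) / ((n : ℝ) + 1 + (d : ℝ) - 1) := h'
        _ = ((n : ℝ) + 2) / ((n : ℝ) + d) := by ring_nf
    have hm0 : (n : ℝ) / ((n : ℝ) + d - 2) ≤ ((n : ℝ) + 2) / ((n : ℝ) + d) := by
      have h' := frac_mono d n hd
      calc (n : ℝ) / ((n : ℝ) + d - 2) ≤ ((n : ℝ) + 1) / ((n : ℝ) + d - 1) := h'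
        _ = ((n : ℝ) + 1) / ((n : ℝ) + 1 + d - 2) := by ring_nf
        _ ≤ ((n : ℝ) + 2) / ((n : ℝ) + d) := hm1
    have hb1 : (0 : ℝ) ≤ ((n : ℝ) + 1) / ((n : ℝ) + 1 + d - 2) + 2 * |t| := by
      have h6 : (0 : ℝ) < (n : ℝ) + 1 + d - 2 := by linarith
      positivity
    have hb0 : (0 : ℝ) ≤ (n : ℝ) / ((n : ℝ) + d - 2) + 2 * |t| := by
      rcases (show (0 : ℝ) ≤ (n : ℝ) + d - 2 by linarith).eq_or_lt with h0 | h0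
      · rw [← h0, div_zero]; positivity
      · positivity
    -- apply induction hypotheses
    have ihA : |legendreP d (n + 1) t| ≤
        (((n : ℝ) + 2) / ((n : ℝ) + d) + 2 * |t|) ^ (((n : ℝ) + 1) / 2) := by
      have hA := ih2 (by push_cast; linarith)
      push_cast at hA
      refine hA.trans ?_
      exact Real.rpow_le_rpow hb1 (by linarith) (by positivity)
    have ihB : |legendreP d n t| ≤
        (((n : ℝ) + 2) / ((n : ℝ) + d) + 2 * |t|) ^ ((n : ℝ) / 2) := by
      have hB := ih1 (by linarith)
      refine hB.trans ?_
      exact Real.rpow_le_rpow hb0 (by linarith) (by positivity)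
    set c : ℝ := ((n : ℝ) + 2) / ((n : ℝ) + d) + 2 * |t| with hc
    -- the recursion and triangle inequality
    have hrec : legendreP d (n + 2) t =
        ((2 * (n : ℝ) + d) / ((n : ℝ) + d - 1)) * t * legendreP d (n + 1) t
          - (((n : ℝ) + 1) / ((n : ℝ) + d - 1)) * legendreP d n t := by
      simp [legendreP]
    have habs : |legendreP d (n + 2) t| ≤
        (2 * (n : ℝ) + d) / ((n : ℝ) + d - 1) * |t| * |legendreP d (n + 1) t|
          + ((n : ℝ) + 1) / ((n : ℝ) + d - 1) * |legendreP d n t| := by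
      rw [hrec]
      refine (abs_sub _ _).trans (le_of_eq ?_)
      rw [abs_mul, abs_mul, abs_mul,
        abs_of_nonneg (div_nonneg (by linarith : (0:ℝ) ≤ 2 * (n:ℝ) + d) hden1.le),
        abs_of_nonneg (div_nonneg (by linarith : (0:ℝ) ≤ (n:ℝ) + 1) hden1.le)]
    -- rpow facts
    have hq : c ^ ((1:ℝ)/2) ≤ 1 := Real.rpow_le_one hcpos.le h (by norm_num)
    have hq0 : (0:ℝ) ≤ c ^ ((1:ℝ)/2) := (Real.rpow_pos_of_pos hcpos _).le
    have hr0 : (0:ℝ) ≤ c ^ ((n:ℝ)/2) := (Real.rpow_pos_of_pos hcpos _).le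
    have hsplit : c ^ (((n:ℝ) + 1)/2) = c ^ ((n:ℝ)/2) * c ^ ((1:ℝ)/2) := by
      rw [← Real.rpow_add hcpos]; ring_nf
    have hfin : c ^ (((n:ℝ) + 2)/2) = c ^ ((n:ℝ)/2) * c := by
      rw [show ((n:ℝ) + 2)/2 = (n:ℝ)/2 + 1 by ring, Real.rpow_add hcpos, Real.rpow_one]
    -- key scalar inequality
    have hkey : (2 * (n : ℝ) + d) / ((n : ℝ) + d - 1) * |t|
        + ((n : ℝ) + 1) / ((n : ℝ) + d - 1) ≤ c := by
      rw [hc]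
      rw [show (2 * (n : ℝ) + d) / ((n : ℝ) + d - 1) * |t|
            + ((n : ℝ) + 1) / ((n : ℝ) + d - 1)
          = ((2 * (n : ℝ) + d) * |t| + ((n : ℝ) + 1)) / ((n : ℝ) + d - 1) by ring,
        show ((n : ℝ) + 2) / ((n : ℝ) + d) + 2 * |t|
          = (((n : ℝ) + 2) + 2 * |t| * ((n : ℝ) + d)) / ((n : ℝ) + d) by
            field_simp,
        div_le_div_iff₀ hden1 hden2]
      nlinarith [mul_nonneg (by linarith : (0:ℝ) ≤ (d:ℝ) - 2)
        (mul_nonneg hs0 hden2.le)]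
    have hAB0 : (0:ℝ) ≤ (2 * (n : ℝ) + d) / ((n : ℝ) + d - 1) * |t| :=
      mul_nonneg (div_nonneg (by linarith) hden1.le) hs0
    have hB0 : (0:ℝ) ≤ ((n : ℝ) + 1) / ((n : ℝ) + d - 1) :=
      div_nonneg (by linarith) hden1.le
    have hshrink : c ^ ((n:ℝ)/2) * c ^ ((1:ℝ)/2) ≤ c ^ ((n:ℝ)/2) :=
      mul_le_of_le_one_right hr0 hq
    calc |legendreP d (n + 2) t|
        ≤ (2 * (n : ℝ) + d) / ((n : ℝ) + d - 1) * |t| * |legendreP d (n + 1) t|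
            + ((n : ℝ) + 1) / ((n : ℝ) + d - 1) * |legendreP d n t| := habs
      _ ≤ (2 * (n : ℝ) + d) / ((n : ℝ) + d - 1) * |t| * (c ^ ((n:ℝ)/2) * c ^ ((1:ℝ)/2))
            + ((n : ℝ) + 1) / ((n : ℝ) + d - 1) * c ^ ((n:ℝ)/2) := by
          rw [← hsplit]
          gcongr
      _ ≤ (2 * (n : ℝ) + d) / ((n : ℝ) + d - 1) * |t| * c ^ ((n:ℝ)/2)
            + ((n : ℝ) + 1) / ((n : ℝ) + d - 1) * c ^ ((n:ℝ)/2) := by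
          exact add_le_add (mul_le_mul_of_nonneg_left hshrink hAB0) le_rfl
      _ = ((2 * (n : ℝ) + d) / ((n : ℝ) + d - 1) * |t|
            + ((n : ℝ) + 1) / ((n : ℝ) + d - 1)) * c ^ ((n:ℝ)/2) := by ring
      _ ≤ c * c ^ ((n:ℝ)/2) := by gcongr
      _ = c ^ (((n:ℝ) + 2)/2) := by rw [hfin]; ring

theorem stmt1 (d n : ℕ) (hd : 2 ≤ d) (t : ℝ) (ht : t ∈ Set.Icc (-1 : ℝ) 1)
    (h : (n : ℝ) / ((n : ℝ) + (d : ℝ) - 2) + 2 * |t| ≤ 1) :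
    |legendreP d n t| ≤
      ((n : ℝ) / ((n : ℝ) + (d : ℝ) - 2) + 2 * |t|) ^ ((n : ℝ) / 2) := by
  exact aux d hd t (abs_le.mpr ⟨ht.1, ht.2⟩) n h
end

section
/- There exist constants E > 0 and 0 < r, s < 1 such that for every K > 0, d ≥ 5, and t ∈ [-1/8, 1/8], the tail sum ∑_{n=K}^∞ |P_{d,n}(t)| ≤ E·r^K + E·s^d. -/
open Real MeasureTheory
open Complex (I)
open Finset (range)

theorem mul_legendreP_add_two {d : ℕ} (hd : 2 ≤ d) (n : ℕ) (x : ℝ) :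
    ((n : ℝ) + d - 1) * legendreP d (n + 2) x
      = (2 * n + d) * x * legendreP d (n + 1) x - (n + 1) * legendreP d n x := by
  have hne : (n : ℝ) + d - 1 ≠ 0 := by
    have : (2 : ℝ) ≤ d := by exact_mod_cast hd
    have : (0 : ℝ) ≤ n := n.cast_nonneg
    linarith
  rw [legendreP]
  field_simp

noncomputable def laplaceBase (t u θ : ℝ) : ℂ := t + u * I * cos θ

noncomputable def laplaceMoment (m : ℕ) (t u : ℝ) (n : ℕ) : ℂ :=
  ∫ θ in 0..π, laplaceBase t u θ ^ n * (sin θ : ℂ) ^ m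

@[fun_prop]
theorem continuous_laplaceBase (t u : ℝ) : Continuous (laplaceBase t u) := by
  unfold laplaceBase; fun_prop

theorem hasDerivAt_laplaceBase (t u θ : ℝ) :
    HasDerivAt (laplaceBase t u) (-(u * I * sin θ)) θ := by
  have h := (((hasDerivAt_cos θ).ofReal_comp).const_mul ((u : ℂ) * I)).const_add (t : ℂ)
  exact h.congr_deriv (by push_cast; ring)

theorem mul_laplaceMoment_add_two {t u : ℝ} (hu : u ^ 2 = 1 - t ^ 2) (m n : ℕ) :
    ((n : ℂ) + m + 2) * laplaceMoment m t u (n + 2)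
      = (2 * n + m + 3) * t * laplaceMoment m t u (n + 1) - (n + 1) * laplaceMoment m t u n := by
  set z := laplaceBase t u
  -- the integrand of the recurrence is `u i` times the derivative of `z ^ (n + 1) * sin ^ (m + 1)`
  have hderiv : ∀ θ, HasDerivAt (fun θ => u * I * (z θ ^ (n + 1) * (sin θ : ℂ) ^ (m + 1)))
      ((n + m + 2) * (z θ ^ (n + 2) * (sin θ : ℂ) ^ m)
        - ((2 * n + m + 3) * t * (z θ ^ (n + 1) * (sin θ : ℂ) ^ m)
          - (n + 1) * (z θ ^ n * (sin θ : ℂ) ^ m))) θ := by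
    intro θ
    have h := (((hasDerivAt_laplaceBase t u θ).fun_pow (n + 1)).mul
      ((hasDerivAt_sin θ).ofReal_comp.fun_pow (m + 1))).const_mul ((u : ℂ) * I)
    refine h.congr_deriv ?_
    have hU : (u : ℂ) ^ 2 = 1 - (t : ℂ) ^ 2 := by exact_mod_cast hu
    have hS : (sin θ : ℂ) ^ 2 = 1 - (cos θ : ℂ) ^ 2 := by
      exact_mod_cast (eq_sub_of_add_eq (sin_sq_add_cos_sq θ))
    simp only [z, laplaceBase, Nat.add_sub_cancel, Nat.cast_add, Nat.cast_one]
    linear_combination (-((n : ℂ) + 1) * (sin θ : ℂ) ^ m * (t + u * I * cos θ) ^ n) *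
      (u ^ 2 * I ^ 2 * hS + I ^ 2 * hU + (1 - t ^ 2) * Complex.I_sq)
  have hint : ∀ k, IntervalIntegrable (fun θ => z θ ^ k * (sin θ : ℂ) ^ m) volume 0 π :=
    fun k => (((continuous_laplaceBase t u).pow k).mul
      ((Complex.continuous_ofReal.comp continuous_sin).pow m)).intervalIntegrable 0 π
  have hzero := intervalIntegral.integral_eq_sub_of_hasDerivAt (fun θ _ => hderiv θ)
    ((((hint _).const_mul _).sub (((hint _).const_mul _).sub ((hint _).const_mul _))))
  rw [intervalIntegral.integral_sub ((hint _).const_mul _)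
      (((hint _).const_mul _).sub ((hint _).const_mul _)),
    intervalIntegral.integral_sub ((hint _).const_mul _) ((hint _).const_mul _)] at hzero
  simp only [intervalIntegral.integral_const_mul, sin_pi, sin_zero, Complex.ofReal_zero,
    zero_pow (Nat.succ_ne_zero m), mul_zero, sub_zero] at hzero
  unfold laplaceMoment
  linear_combination hzero

theorem laplaceMoment_zero (m : ℕ) (t u : ℝ) :
    laplaceMoment m t u 0 = ((∫ θ in 0..π, sin θ ^ m : ℝ) : ℂ) := by
  rw [laplaceMoment, ← intervalIntegral.integral_ofReal]
  simp only [pow_zero, one_mul, Complex.ofReal_pow]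

theorem laplaceMoment_one (m : ℕ) (t u : ℝ) :
    laplaceMoment m t u 1 = t * ((∫ θ in 0..π, sin θ ^ m : ℝ) : ℂ) := by
  have hcos : ∫ θ in 0..π, sin θ ^ m * cos θ = 0 := by
    simpa using integral_sin_pow_mul_cos_pow_odd (a := 0) (b := π) m 0
  have hsplit : ∀ θ : ℝ, laplaceBase t u θ ^ 1 * (sin θ : ℂ) ^ m
      = t * ((sin θ ^ m : ℝ) : ℂ) + u * I * ((sin θ ^ m * cos θ : ℝ) : ℂ) := by
    intro θ; simp only [laplaceBase]; push_cast; ring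
  have hint : ∀ f : ℝ → ℝ, Continuous f →
      IntervalIntegrable (fun θ => (f θ : ℂ)) volume 0 π :=
    fun f hf => (Complex.continuous_ofReal.comp hf).intervalIntegrable 0 π
  simp only [laplaceMoment, hsplit]
  rw [intervalIntegral.integral_add ((hint _ (by fun_prop)).const_mul _)
      ((hint _ (by fun_prop)).const_mul _), intervalIntegral.integral_const_mul,
    intervalIntegral.integral_const_mul, intervalIntegral.integral_ofReal,
    intervalIntegral.integral_ofReal, hcos]
  simp

theorem legendreP_mul_integral_sin_pow {t u : ℝ} (hu : u ^ 2 = 1 - t ^ 2) (m n : ℕ) :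
    (legendreP (m + 3) n t : ℂ) * ((∫ θ in 0..π, sin θ ^ m : ℝ) : ℂ)
      = laplaceMoment m t u n := by
  induction n using Nat.twoStepInduction with
  | zero => simp [legendreP, laplaceMoment_zero]
  | one => simp [legendreP, laplaceMoment_one]
  | more n ih₀ ih₁ =>
    have hne : (n : ℂ) + m + 2 ≠ 0 := by exact_mod_cast (by omega : n + m + 2 ≠ 0)
    have hP := congrArg (fun x : ℝ => (x : ℂ))
      (mul_legendreP_add_two (by omega : 2 ≤ m + 3) n t)
    push_cast at hP
    apply mul_left_cancel₀ hne
    rw [mul_laplaceMoment_add_two hu, ← ih₀, ← ih₁]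
    linear_combination ((∫ θ in 0..π, sin θ ^ m : ℝ) : ℂ) * hP

theorem norm_laplaceBase_sq {t u : ℝ} (hu : u ^ 2 = 1 - t ^ 2) (θ : ℝ) :
    ‖laplaceBase t u θ‖ ^ 2 = 1 - u ^ 2 * sin θ ^ 2 := by
  have h : laplaceBase t u θ = t + (u * cos θ : ℝ) * I := by
    simp only [laplaceBase]; push_cast; ring
  rw [h, Complex.sq_norm, Complex.normSq_add_mul_I]
  linear_combination hu + u ^ 2 * sin_sq_add_cos_sq θ

theorem abs_legendreP_mul_integral_le {t u : ℝ} (hu : u ^ 2 = 1 - t ^ 2) (m n : ℕ) :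
    |legendreP (m + 3) n t| * ∫ θ in 0..π, sin θ ^ m
      ≤ ∫ θ in 0..π, ‖laplaceBase t u θ‖ ^ n * sin θ ^ m := by
  have h := congrArg norm (legendreP_mul_integral_sin_pow hu m n)
  rw [norm_mul, Complex.norm_real, Complex.norm_real, Real.norm_eq_abs, Real.norm_eq_abs,
    abs_of_pos (integral_sin_pow_pos m)] at h
  rw [h]
  refine (intervalIntegral.norm_integral_le_integral_norm pi_pos.le).trans_eq
    (intervalIntegral.integral_congr fun θ hθ => ?_)
  rw [Set.uIcc_of_le pi_pos.le] at hθ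
  rw [norm_mul, norm_pow, norm_pow, Complex.norm_real, Real.norm_eq_abs,
    abs_of_nonneg (sin_nonneg_of_mem_Icc hθ)]

theorem geom_tail_mul_pow_le {x s a : ℝ} (hx : 0 ≤ x) (hs : 0 ≤ s) (ha : 63 / 64 ≤ a)
    (hxs : x ^ 2 = 1 - a * s ^ 2) (K N p : ℕ) :
    (∑ n ∈ range N, x ^ (K + n)) * s ^ (p + 2)
      ≤ 4 * (3 / 4) ^ K * s ^ (p + 2) + 128 / 63 * (2 / 3) ^ p := by
  rcases hs.eq_or_lt with rfl | hs₀
  · rw [zero_pow (by omega), mul_zero, mul_zero, zero_add]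
    positivity
  have hx₁ : x < 1 := by nlinarith
  have hgeom : ∑ n ∈ range N, x ^ (K + n) ≤ x ^ K / (1 - x) := by
    simpa [Finset.sum_Ico_eq_sum_range] using
      geom_sum_Ico_le_of_lt_one (m := K) (n := K + N) hx hx₁
  rcases le_or_gt x (3 / 4) with hx34 | hx34
  · have hK : x ^ K / (1 - x) ≤ 4 * (3 / 4) ^ K := by
      rw [div_le_iff₀ (by linarith)]
      nlinarith [pow_le_pow_left₀ hx hx34 K, pow_nonneg hx K]
    have := mul_le_mul_of_nonneg_right (hgeom.trans hK) (pow_nonneg hs (p + 2))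
    have : (0 : ℝ) ≤ 128 / 63 * (2 / 3) ^ p := by positivity
    linarith
  · -- here `s` is small, and `1 - x ≥ (1 - x ^ 2) / 2 = a s ^ 2 / 2`
    have hs23 : s ≤ 2 / 3 := by nlinarith
    have h1x : a * s ^ 2 / 2 ≤ 1 - x := by nlinarith
    have hxK : x ^ K ≤ 1 := pow_le_one₀ hx hx₁.le
    calc (∑ n ∈ range N, x ^ (K + n)) * s ^ (p + 2)
        ≤ 1 / (a * s ^ 2 / 2) * s ^ (p + 2) := by
          gcongr
          calc _ ≤ x ^ K / (1 - x) := hgeom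
            _ ≤ 1 / (1 - x) := by gcongr
            _ ≤ 1 / (a * s ^ 2 / 2) := by gcongr
      _ = 2 / a * s ^ p := by field_simp; ring
      _ ≤ 128 / 63 * (2 / 3) ^ p := by
          have : 2 / a ≤ 128 / 63 := by rw [div_le_iff₀ (by linarith)]; linarith
          gcongr
      _ ≤ _ := le_add_of_nonneg_left (by positivity)

theorem sqrt_three_div_two_le_sin {θ : ℝ} (hθ : θ ∈ Set.Icc (π / 3) (2 * π / 3)) :
    √3 / 2 ≤ sin θ := by
  have h : cos (π / 6) ≤ cos |π / 2 - θ| := by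
    apply cos_le_cos_of_nonneg_of_le_pi (abs_nonneg _) (by linarith [pi_pos])
    rw [abs_le]; constructor <;> linarith [hθ.1, hθ.2]
  rwa [cos_abs, cos_pi_div_two_sub, cos_pi_div_six] at h

theorem mul_pow_le_integral_sin_pow (m : ℕ) :
    π / 3 * (√3 / 2) ^ m ≤ ∫ θ in 0..π, sin θ ^ m := by
  have hcont : Continuous fun θ => sin θ ^ m := by fun_prop
  calc π / 3 * (√3 / 2) ^ m = ∫ _ in π / 3..2 * π / 3, (√3 / 2) ^ m := by
        rw [intervalIntegral.integral_const, smul_eq_mul]; ring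
    _ ≤ ∫ θ in π / 3..2 * π / 3, sin θ ^ m :=
        intervalIntegral.integral_mono_on (by linarith [pi_pos]) intervalIntegrable_const
          (hcont.intervalIntegrable _ _)
          fun θ hθ => pow_le_pow_left₀ (by positivity) (sqrt_three_div_two_le_sin hθ) m
    _ ≤ ∫ θ in 0..π, sin θ ^ m :=
        intervalIntegral.integral_mono_interval (by positivity) (by linarith [pi_pos])
          (by linarith [pi_pos])
          ((ae_restrict_mem measurableSet_Ioc).mono fun θ hθ =>
            pow_nonneg (sin_nonneg_of_nonneg_of_le_pi hθ.1.le hθ.2) m)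
          (hcont.intervalIntegrable _ _)

theorem sum_range_abs_legendreP_mul_integral_le {t : ℝ} (ht : |t| ≤ 1 / 8) (p K N : ℕ) :
    (∑ n ∈ range N, |legendreP (p + 5) (K + n) t|) * ∫ θ in 0..π, sin θ ^ (p + 2)
      ≤ 4 * (3 / 4) ^ K * (∫ θ in 0..π, sin θ ^ (p + 2))
        + π * (128 / 63 * (2 / 3) ^ p) := by
  set u := √(1 - t ^ 2)
  have ht2 : t ^ 2 ≤ 1 / 64 := by nlinarith [sq_abs t, abs_nonneg t]
  have hu : u ^ 2 = 1 - t ^ 2 := sq_sqrt (by linarith)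
  have ha : 63 / 64 ≤ u ^ 2 := by rw [hu]; linarith
  have hint : ∀ k, IntervalIntegrable (fun θ => ‖laplaceBase t u θ‖ ^ k * sin θ ^ (p + 2))
      volume 0 π := fun k => by
    apply Continuous.intervalIntegrable; fun_prop
  calc (∑ n ∈ range N, |legendreP (p + 5) (K + n) t|) * ∫ θ in 0..π, sin θ ^ (p + 2)
      ≤ ∑ n ∈ range N,
          ∫ θ in 0..π, ‖laplaceBase t u θ‖ ^ (K + n) * sin θ ^ (p + 2) := by
        rw [Finset.sum_mul]
        exact Finset.sum_le_sum fun n _ => abs_legendreP_mul_integral_le hu (p + 2) (K + n)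
    _ = ∫ θ in 0..π,
          (∑ n ∈ range N, ‖laplaceBase t u θ‖ ^ (K + n)) * sin θ ^ (p + 2) := by
        simp_rw [Finset.sum_mul]
        exact (intervalIntegral.integral_finsetSum fun n _ => hint (K + n)).symm
    _ ≤ ∫ θ in 0..π, (4 * (3 / 4) ^ K * sin θ ^ (p + 2) + 128 / 63 * (2 / 3) ^ p) := by
        refine intervalIntegral.integral_mono_on pi_pos.le ?_ ?_ fun θ hθ =>
          geom_tail_mul_pow_le (norm_nonneg _) (sin_nonneg_of_mem_Icc hθ) ha
            (norm_laplaceBase_sq hu θ) K N p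
        all_goals apply Continuous.intervalIntegrable; fun_prop
    _ = 4 * (3 / 4) ^ K * (∫ θ in 0..π, sin θ ^ (p + 2))
          + π * (128 / 63 * (2 / 3) ^ p) := by
        rw [intervalIntegral.integral_add (by apply Continuous.intervalIntegrable; fun_prop)
          intervalIntegrable_const, intervalIntegral.integral_const_mul,
          intervalIntegral.integral_const, smul_eq_mul, sub_zero]

theorem sum_range_abs_legendreP_le {t : ℝ} (ht : |t| ≤ 1 / 8) (p K N : ℕ) :
    ∑ n ∈ range N, |legendreP (p + 5) (K + n) t|
      ≤ 4 * (3 / 4) ^ K + 25 * (5 / 6) ^ (p + 5) := by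
  have hJ := integral_sin_pow_pos (p + 2)
  have hsum := sum_range_abs_legendreP_mul_integral_le ht p K N
  rw [← le_div_iff₀ hJ, add_div, mul_div_assoc, div_self hJ.ne', mul_one] at hsum
  have hconst : π * (128 / 63 * (2 / 3) ^ p) / (π / 3 * (√3 / 2) ^ (p + 2))
      ≤ 25 * (5 / 6) ^ (p + 5) := by
    have h3 : (√3 / 2) ^ 2 = 3 / 4 := by rw [div_pow, sq_sqrt (by norm_num)]; norm_num
    have hbase : 2 / 3 ≤ 5 / 6 * (√3 / 2) := by
      nlinarith [sq_sqrt (show (0 : ℝ) ≤ 3 by norm_num), sqrt_nonneg 3]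
    have hpow : (2 / 3 : ℝ) ^ p ≤ (5 / 6) ^ p * (√3 / 2) ^ p := by
      rw [← mul_pow]; exact pow_le_pow_left₀ (by norm_num) hbase p
    rw [div_le_iff₀ (by positivity), pow_add, pow_add, h3]
    nlinarith [pi_pos, pow_nonneg (show (0 : ℝ) ≤ 2 / 3 by norm_num) p]
  calc _ ≤ _ := hsum
    _ ≤ 4 * (3 / 4) ^ K + π * (128 / 63 * (2 / 3) ^ p) / (π / 3 * (√3 / 2) ^ (p + 2)) := by
        gcongr
        exact mul_pow_le_integral_sin_pow (p + 2)
    _ ≤ 4 * (3 / 4) ^ K + 25 * (5 / 6) ^ (p + 5) := by gcongr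

theorem stmt2 :
    ∃ E > (0 : ℝ), ∃ r ∈ Set.Ioo (0 : ℝ) 1, ∃ s ∈ Set.Ioo (0 : ℝ) 1,
      ∀ (K d : ℕ), 0 < K → 5 ≤ d → ∀ t : ℝ, |t| ≤ 1 / 8 →
        ∑' n : ℕ, |legendreP d (K + n) t| ≤ E * r ^ K + E * s ^ d := by
  refine ⟨25, by norm_num, 3 / 4, ⟨by norm_num, by norm_num⟩, 5 / 6,
    ⟨by norm_num, by norm_num⟩, ?_⟩
  intro K d _ hd t ht
  obtain ⟨p, rfl⟩ := Nat.exists_eq_add_of_le' hd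
  refine Real.tsum_le_of_sum_range_le (fun _ => abs_nonneg _) fun N => ?_
  calc _ ≤ 4 * (3 / 4) ^ K + 25 * (5 / 6) ^ (p + 5) := sum_range_abs_legendreP_le ht p K N
    _ ≤ 25 * (3 / 4) ^ K + 25 * (5 / 6) ^ (p + 5) := by gcongr; norm_num
end

section
/- Let l : ℝ → ℝ be a convex surrogate loss (convex and l ≥ l_{0-1} pointwise), let μ be a probability measure on a set X, let f : X → ℝ be integrable, and let μ̄ be the product of μ with the uniform distribution on {±1}. Then ∫ |f| dμ ≤ (2/|∂₊l(0)|) · E_{(x,y)∼μ̄}[l(y f(x))], provided ∂₊l(0) < 0. -/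
/-!
By convexity, `l` lies above its right tangent line at `0`, so `l (-t) ≥ l 0 + |a| t ≥ |a| t`
for `t ≥ 0`. As `l ≥ 0`, this gives `|a| |f x| ≤ l (-|f x|) ≤ l (f x) + l (-f x)` pointwise,
and integrating yields the bound.
-/

open MeasureTheory Set

namespace ConvexOn

variable {S : Set ℝ} {f : ℝ → ℝ} {x y f' : ℝ}

lemma slope_le_of_hasDerivWithinAt_Ioi (hfc : ConvexOn ℝ S f) (hy : y ∈ S)
    (hx : x ∈ interior S) (hyx : y < x) (hf' : HasDerivWithinAt f f' (Ioi x) x) :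
    slope f y x ≤ f' := by
  apply ge_of_tendsto <| (hasDerivWithinAt_iff_tendsto_slope' self_notMem_Ioi).mp hf'
  filter_upwards [nhdsWithin_le_nhds (mem_interior_iff_mem_nhds.mp hx), self_mem_nhdsWithin]
    with t htS (hxt : x < t)
  rw [slope_comm]
  exact hfc.slope_mono (interior_subset hx) ⟨hy, hyx.ne⟩ ⟨htS, hxt.ne'⟩ (hyx.trans hxt).le

lemma add_mul_sub_le_of_hasDerivWithinAt_Ioi (hfc : ConvexOn ℝ S f) (hx : x ∈ interior S)
    (hy : y ∈ S) (hf' : HasDerivWithinAt f f' (Ioi x) x) :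
    f x + f' * (y - x) ≤ f y := by
  rcases lt_trichotomy y x with hyx | rfl | hxy
  · have := hfc.slope_le_of_hasDerivWithinAt_Ioi hy hx hyx hf'
    rw [slope_def_field, div_le_iff₀ (sub_pos.mpr hyx)] at this
    linarith
  · simp
  · have := hfc.le_slope_of_hasDerivWithinAt_Ioi (interior_subset hx) hy hxy hf'
    rw [slope_def_field, le_div_iff₀ (sub_pos.mpr hxy)] at this
    linarith

end ConvexOn

lemma neg_mul_abs_le_add_apply_neg {l : ℝ → ℝ} {a : ℝ} (hconv : ConvexOn ℝ univ l)
    (hl0 : ∀ x, 0 ≤ l x) (ha : HasDerivWithinAt l a (Ioi 0) 0) (t : ℝ) :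
    -a * |t| ≤ l t + l (-t) := by
  have htangent : l 0 + a * (-|t| - 0) ≤ l (-|t|) :=
    hconv.add_mul_sub_le_of_hasDerivWithinAt_Ioi (by simp) (mem_univ _) ha
  have hsum : l (-|t|) ≤ l t + l (-t) := by
    rcases abs_choice t with h | h <;> rw [h]
    · linarith [hl0 t]
    · rw [neg_neg]; linarith [hl0 (-t)]
  linarith [hl0 0]

theorem stmt8_general {X : Type*} [MeasurableSpace X] (μ : Measure X)
    (l : ℝ → ℝ) (hconv : ConvexOn ℝ Set.univ l)
    (hl0 : ∀ x, 0 ≤ l x)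
    (a : ℝ) (ha : HasDerivWithinAt l a (Set.Ici 0) 0) (hneg : a < 0)
    (f : X → ℝ)
    (h1 : Integrable (fun x => l (f x)) μ) (h2 : Integrable (fun x => l (-f x)) μ) :
    (∫ x, |f x| ∂μ) ≤
      (2 / |a|) * ((1 / 2) * ∫ x, l (f x) ∂μ + (1 / 2) * ∫ x, l (-f x) ∂μ) := by
  have hpointwise (x : X) : |f x| ≤ (l (f x) + l (-f x)) / |a| := by
    rw [le_div_iff₀ (abs_pos.mpr hneg.ne), abs_of_neg hneg, mul_comm]
    exact neg_mul_abs_le_add_apply_neg hconv hl0 (ha.mono Ioi_subset_Ici_self) (f x)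
  calc (∫ x, |f x| ∂μ) ≤ ∫ x, (l (f x) + l (-f x)) / |a| ∂μ :=
        integral_mono_of_nonneg (ae_of_all _ fun x => abs_nonneg _) ((h1.add h2).div_const _)
          (ae_of_all _ hpointwise)
    _ = (2 / |a|) * ((1 / 2) * ∫ x, l (f x) ∂μ + (1 / 2) * ∫ x, l (-f x) ∂μ) := by
        rw [integral_div, integral_add h1 h2]
        ring

theorem stmt8 {X : Type*} [MeasurableSpace X] (μ : Measure X) [IsProbabilityMeasure μ]
    (l : ℝ → ℝ) (hconv : ConvexOn ℝ Set.univ l)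
    (hl01 : ∀ x, (if x ≤ 0 then (1 : ℝ) else 0) ≤ l x)
    (hl0 : ∀ x, 0 ≤ l x)
    (a : ℝ) (ha : HasDerivWithinAt l a (Set.Ici 0) 0) (hneg : a < 0)
    (f : X → ℝ) (hf : Integrable f μ)
    (h1 : Integrable (fun x => l (f x)) μ) (h2 : Integrable (fun x => l (-f x)) μ) :
    (∫ x, |f x| ∂μ) ≤
      (2 / |a|) * ((1 / 2) * ∫ x, l (f x) ∂μ + (1 / 2) * ∫ x, l (-f x) ∂μ) :=
  stmt8_general μ l hconv hl0 a ha hneg f h1 h2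
end

section
/- Let l be a convex function with l(x) ≥ max(0, 1_{x≤0}) and right derivative a = ∂₊l(0) < 0 at 0. Define l*(x) = a·x + 1 for x ≤ 1/(-a) and l*(x) = 0 otherwise. Then l* is convex, satisfies l*(x) ≤ l(x) for all x, l*(x) ≥ l_{0-1}(x) for all x, and ∂₊l*(0) = a. -/
/-- The hinge-like minorant `l*(x) = a·x + 1` for `x ≤ 1/(-a)`, and `0` otherwise. -/
noncomputable def lstar (a : ℝ) : ℝ → ℝ := fun x =>
  if x ≤ 1 / (-a) then a * x + 1 else 0

lemma lstar_eq_max (a : ℝ) (hneg : a < 0) : lstar a = fun x => max (a * x + 1) 0 := by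
  funext x
  unfold lstar
  have h2 : a * (1 / (-a)) = -1 := by
    rw [mul_one_div, div_neg, div_self hneg.ne]
  split_ifs with h
  · have : a * (1 / (-a)) ≤ a * x := mul_le_mul_of_nonpos_left h hneg.le
    rw [max_eq_left]; linarith
  · push_neg at h
    have : a * x < a * (1 / (-a)) := mul_lt_mul_of_neg_left h hneg
    rw [max_eq_right]; linarith

theorem stmt9 (l : ℝ → ℝ) (hconv : ConvexOn ℝ Set.univ l)
    (hl01 : ∀ x, (if x ≤ 0 then (1 : ℝ) else 0) ≤ l x)
    (hl0 : ∀ x, 0 ≤ l x)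
    (a : ℝ) (ha : HasDerivWithinAt l a (Set.Ici 0) 0) (hneg : a < 0) :
    ConvexOn ℝ Set.univ (lstar a) ∧
    (∀ x, lstar a x ≤ l x) ∧
    (∀ x, (if x ≤ 0 then (1 : ℝ) else 0) ≤ lstar a x) ∧
    HasDerivWithinAt (lstar a) a (Set.Ici 0) 0 := by
  have hna : 0 < -a := neg_pos.mpr hneg
  have hpos : 0 < 1 / (-a) := by positivity
  have hl0' : (1:ℝ) ≤ l 0 := by simpa using hl01 0
  have hdiff : Set.Ici (0:ℝ) \ {0} = Set.Ioi 0 := Set.Ici_sdiff_left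
  have htend : Filter.Tendsto (slope l 0) (nhdsWithin 0 (Set.Ioi 0)) (nhds a) := by
    rw [← hdiff]; exact hasDerivWithinAt_iff_tendsto_slope.mp ha
  haveI : (nhdsWithin (0:ℝ) (Set.Ioi 0)).NeBot := nhdsGT_neBot 0
  -- tangent line bound
  have hkey : ∀ x : ℝ, x ≠ 0 → l 0 + a * x ≤ l x := by
    intro x hx0
    have hslope : slope l 0 x = (l x - l 0) / x := by
      rw [slope_def_field]; ring_nf
    rcases lt_or_gt_of_ne hx0 with hx | hx
    · -- x < 0 : slope l 0 x ≤ a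
      have hle : slope l 0 x ≤ a := by
        refine ge_of_tendsto htend ?_
        filter_upwards [self_mem_nhdsWithin] with y hy
        rw [slope_def_field, slope_def_field]
        exact hconv.secant_mono (a := 0) (Set.mem_univ _) (Set.mem_univ _)
          (Set.mem_univ _) hx0 (ne_of_gt hy) (le_of_lt (lt_trans hx hy))
      rw [hslope, div_le_iff_of_neg hx] at hle
      linarith
    · -- x > 0 : a ≤ slope l 0 x
      have hle : a ≤ slope l 0 x := by
        refine le_of_tendsto htend ?_
        filter_upwards [self_mem_nhdsWithin,
          inter_mem_nhdsWithin _ (Metric.ball_mem_nhds (0:ℝ) hx)] with y hy hy2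
        have hy0 : 0 < y := hy
        have hyx : y ≤ x := by
          have := hy2.2
          simp only [Real.ball_eq_Ioo, Set.mem_Ioo, zero_sub, zero_add] at this
          linarith [this.2]
        rw [slope_def_field, slope_def_field]
        exact hconv.secant_mono (a := 0) (Set.mem_univ _) (Set.mem_univ _)
          (Set.mem_univ _) hy0.ne' hx.ne' hyx
      rw [hslope, le_div_iff₀ hx] at hle
      linarith
  refine ⟨?_, ?_, ?_, ?_⟩
  · rw [lstar_eq_max a hneg]
    have haff : ConvexOn ℝ Set.univ (fun x : ℝ => a * x + 1) := by
      refine ⟨convex_univ, fun x _ y _ p q hp hq hpq => le_of_eq ?_⟩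
      simp only [smul_eq_mul]
      linear_combination -hpq
    exact haff.sup (convexOn_const 0 convex_univ)
  · intro x
    unfold lstar
    split_ifs with h
    · rcases eq_or_ne x 0 with rfl | hx0
      · simpa using hl0'
      · have := hkey x hx0; linarith
    · exact hl0 x
  · intro x
    rw [lstar_eq_max a hneg]
    split_ifs with h
    · have : 0 ≤ a * x := by nlinarith
      simp only [le_max_iff]; left; linarith
    · simp
  · have hlin : HasDerivWithinAt (fun x : ℝ => a * x + 1) a (Set.Ici 0) 0 := by
      simpa using (((hasDerivAt_id (0:ℝ)).const_mul a).add_const 1).hasDerivWithinAt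
    have heq : lstar a =ᶠ[nhdsWithin 0 (Set.Ici 0)] (fun x : ℝ => a * x + 1) := by
      filter_upwards [inter_mem_nhdsWithin _ (Metric.ball_mem_nhds (0:ℝ) hpos)] with y hy
      have hy' : y ≤ 1 / (-a) := by
        have := hy.2
        simp only [Real.ball_eq_Ioo, Set.mem_Ioo, zero_sub, zero_add] at this
        linarith [this.2]
      show lstar a y = a * y + 1
      rw [lstar, if_pos hy']
    refine hlin.congr_of_eventuallyEq heq ?_
    show lstar a 0 = a * 0 + 1
    rw [lstar, if_pos hpos.le]
end
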